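/- Let w be a word over Σ_p at which Φ_p is defined, with left-to-right counters (H_i, v_i). Then for every i, the prefix sum w_1 + … + w_i equals wt_ℓ(H_i) + v_i. -/
import Mathlib


/-- Words over the alphabet `Σ_p = {-1, 0, 1, …, p}`. -/
def SigmaWord (p : ℕ) (w : List ℤ) : Prop := ∀ a ∈ w, -1 ≤ a ∧ a ≤ (p : ℤ)

/-- A `p`-Łukasiewicz word: a word over `Σ_p` all of whose prefix sums are
nonnegative and whose total sum is `0`. -/
def Lukasiewicz (p : ℕ) (w : List ℤ) : Prop :=
  SigmaWord p w ∧ (∀ i, 0 ≤ (w.take i).sum) ∧ w.sum = 0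

/-- The step set `S_p`: the vectors `(-j, p-j)` for `0 ≤ j ≤ p` together with `(1, -1)`. -/
def InSp (p : ℕ) (s : ℤ × ℤ) : Prop :=
  s = (1, -1) ∨ ∃ j : ℕ, j ≤ p ∧ s = (-(j : ℤ), (p : ℤ) - (j : ℤ))

/-- A quarter-plane `p`-tandem word: a word over `S_p` all of whose prefix sums
have both coordinates nonnegative. -/
def Tandem (p : ℕ) (w : List (ℤ × ℤ)) : Prop :=
  (∀ a ∈ w, InSp p a) ∧ ∀ i, 0 ≤ ((w.take i).sum).1 ∧ 0 ≤ ((w.take i).sum).2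

/-- A word over the alphabet `A_p = { a_{ℓ,m} : ℓ + m ≤ p - 1 }`; letters are
encoded as pairs `(ℓ, m) : ℕ × ℕ`.  The stack `H` is represented with its most
recently appended (rightmost) letter at the *head* of the list. -/
def HValid (p : ℕ) (H : List (ℕ × ℕ)) : Prop := ∀ x ∈ H, x.1 + x.2 + 1 ≤ p

/-- The forward step map `F`: from an input letter `μ ∈ Σ_p` and a counter
`(H, v)`, produce the new counter together with the output letter in `S_p`;
`none` is the error on the forbidden input `(-1, ε, 0)`.  The stack `H` has its
most recently appended letter at the head of the list. -/
def Fstep (p : ℕ) (μ : ℤ) (H : List (ℕ × ℕ)) (v : ℕ) :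
    Option (List (ℕ × ℕ) × ℕ × (ℤ × ℤ)) :=
  if μ = (p : ℤ) then some (H, v + p, ((0 : ℤ), (p : ℤ)))
  else if 0 ≤ μ then
    -- here `0 ≤ μ ≤ p - 1`
    if v = 0 then some (H, μ.toNat, ((0 : ℤ), (p : ℤ)))
    else some ((μ.toNat, 0) :: H, v - 1, ((1 : ℤ), (-1 : ℤ)))
  else
    -- here `μ = -1`
    match H, v with
    | [], 0 => none
    | [], v' + 1 => some ([], v', ((1 : ℤ), (-1 : ℤ)))
    | (l, m) :: H', 0 => some (H', l, (-(m : ℤ) - 1, (p : ℤ) - (m : ℤ) - 1))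
    | (l, m) :: H', v' + 1 =>
      if l + m + 1 = p then
        some (H', (v' + 1) + l, (-(m : ℤ) - 1, (p : ℤ) - (m : ℤ) - 1))
      else some ((l, m + 1) :: H', v', ((1 : ℤ), (-1 : ℤ)))

/-- The left-to-right process: starting from the counter `(H, v)`, process the
letters of the input word in order, returning the final counter together with
the output word, or `none` if an error occurs. -/
def PhiRun (p : ℕ) : List (ℕ × ℕ) → ℕ → List ℤ →
    Option (List (ℕ × ℕ) × ℕ × List (ℤ × ℤ))
  | H, v, [] => some (H, v, [])
  | H, v, μ :: w =>
    match Fstep p μ H v with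
    | none => none
    | some (H', v', a) => (PhiRun p H' v' w).map (fun r => (r.1, r.2.1, a :: r.2.2))

/-- The partial map `Φ_p`: run the left-to-right process from `(ε, 0)` and
return the output word. -/
def Phi (p : ℕ) (w : List ℤ) : Option (List (ℤ × ℤ)) :=
  (PhiRun p [] 0 w).map (fun r => r.2.2)

/-- The backward step map `B`: from a counter `(H, v)` and a letter `ā ∈ S_p`,
produce the input letter `μ ∈ Σ_p` and the previous counter.  The stack `H` has
its most recently appended letter at the head of the list.  (The value on
letters outside `S_p` is irrelevant junk.) -/
def Bstep (p : ℕ) (H : List (ℕ × ℕ)) (v : ℕ) (a : ℤ × ℤ) :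
    ℤ × List (ℕ × ℕ) × ℕ :=
  if a = ((1 : ℤ), (-1 : ℤ)) then
    match H with
    | [] => (-1, [], v + 1)
    | (l, 0) :: H' => ((l : ℤ), H', v + 1)
    | (l, m + 1) :: H' => (-1, (l, m) :: H', v + 1)
  else if a.1 = 0 then
    -- here `a = (0, p)`
    if v ≤ p - 1 then ((v : ℤ), H, 0) else ((p : ℤ), H, v - p)
  else
    -- here `a = (-m - 1, p - m - 1)` with `0 ≤ m ≤ p - 1`
    let m : ℕ := (-a.1 - 1).toNat
    if v ≤ p - m - 1 then (-1, (v, m) :: H, 0)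
    else (-1, (p - m - 1, m) :: H, v - (p - m - 1))

/-- The right-to-left process: starting from the counter `(ε, 0)` at the right
end of the word, process the letters from right to left, returning the counter
at the left end together with the output word. -/
def PsiRun (p : ℕ) : List (ℤ × ℤ) → List (ℕ × ℕ) × ℕ × List ℤ
  | [] => ([], 0, [])
  | a :: rest =>
    let r := PsiRun p rest
    let s := Bstep p r.1 r.2.1 a
    (s.2.1, s.2.2, s.1 :: r.2.2)

/-- The total map `Ψ_p`. -/
def Psi (p : ℕ) (w : List (ℤ × ℤ)) : List ℤ := (PsiRun p w).2.2

/-- The weight `wt_ℓ`, determined on letters by `wt_ℓ(a_{ℓ,m}) = ℓ + 1`. -/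
def wtl (H : List (ℕ × ℕ)) : ℕ := (H.map (fun x => x.1 + 1)).sum

/-- The weight `wt_m`, determined on letters by `wt_m(a_{ℓ,m}) = m + 1`. -/
def wtm (H : List (ℕ × ℕ)) : ℕ := (H.map (fun x => x.2 + 1)).sum

lemma wtl_cons (l m : ℕ) (H : List (ℕ × ℕ)) : wtl ((l, m) :: H) = l + 1 + wtl H := by
  simp [wtl]

lemma Fstep_wtl (p : ℕ) (μ : ℤ) (hμ1 : -1 ≤ μ) (H H' : List (ℕ × ℕ)) (v v' : ℕ)
    (a : ℤ × ℤ) (h : Fstep p μ H v = some (H', v', a)) :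
    (wtl H' : ℤ) + v' = wtl H + v + μ := by
  unfold Fstep at h
  split_ifs at h with h1 h2 h3
  · obtain ⟨rfl, rfl, rfl⟩ := by simpa using h
    push_cast; omega
  · obtain ⟨rfl, rfl, rfl⟩ := by simpa using h
    rw [Int.toNat_of_nonneg h2]; omega
  · obtain ⟨rfl, rfl, rfl⟩ := by simpa using h
    rw [wtl_cons]; push_cast [Int.toNat_of_nonneg h2]; omega
  · have hμ : μ = -1 := by omega
    subst hμ
    rcases H with _ | ⟨⟨l, m⟩, H''⟩ <;> rcases v with _ | v
    · simp at h
    · obtain ⟨rfl, rfl, rfl⟩ := by simpa using h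
      simp; push_cast; omega
    · obtain ⟨rfl, rfl, rfl⟩ := by simpa using h
      rw [wtl_cons]; push_cast; omega
    · by_cases hp : l + m + 1 = p <;> simp only [hp, if_true, if_false, if_pos, if_neg,
        Option.some.injEq, Prod.mk.injEq] at h
      · obtain ⟨rfl, rfl, rfl⟩ := h
        rw [wtl_cons]; push_cast; omega
      · obtain ⟨rfl, rfl, rfl⟩ := h
        rw [wtl_cons, wtl_cons]; push_cast; omega

lemma PhiRun_wtl (p : ℕ) : ∀ (w : List ℤ) (H0 : List (ℕ × ℕ)) (v0 : ℕ)
    (H : List (ℕ × ℕ)) (v : ℕ) (out : List (ℤ × ℤ)), SigmaWord p w →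
    PhiRun p H0 v0 w = some (H, v, out) →
    (wtl H : ℤ) + v = wtl H0 + v0 + w.sum := by
  intro w
  induction w with
  | nil =>
    intro H0 v0 H v out _ h
    obtain ⟨rfl, rfl, rfl⟩ := by simpa [PhiRun] using h
    simp
  | cons μ w ih =>
    intro H0 v0 H v out hw h
    rw [PhiRun] at h
    cases hF : Fstep p μ H0 v0 with
    | none => rw [hF] at h; simp at h
    | some r =>
      obtain ⟨H1, v1, a⟩ := r
      rw [hF] at h
      simp only [Option.map_eq_some_iff] at h
      obtain ⟨⟨H2, v2, out2⟩, hrun, heq⟩ := h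
      obtain ⟨rfl, rfl, rfl⟩ := by simpa using heq
      have h1 := Fstep_wtl p μ (hw μ (by simp)).1 H0 H1 v0 v1 a hF
      have h2 := ih H1 v1 H2 v2 out2 (fun a ha => hw a (by simp [ha])) hrun
      simp only [List.sum_cons]
      omega

theorem prefix_sum_eq_wtl_add_v (p : ℕ) (hp : 1 ≤ p)
    (w : List ℤ) (hw : SigmaWord p w) (hdef : (PhiRun p [] 0 w).isSome) :
    ∀ (i : ℕ) (H : List (ℕ × ℕ)) (v : ℕ) (out : List (ℤ × ℤ)),
      PhiRun p [] 0 (w.take i) = some (H, v, out) →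
        (w.take i).sum = (wtl H : ℤ) + (v : ℤ) := by
  intro i H v out h
  have := PhiRun_wtl p (w.take i) [] 0 H v out
    (fun a ha => hw a (List.mem_of_mem_take ha)) h
  simpa [wtl] using this.symm
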